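/- Let G = (V,E) be a finite simple graph on V = {1,…,n} with n ≥ 1 and let J be any set of subsets of V. Then z^E_J(G) ≤ z^C_J(G). -/

import Mathlib

/-!
A feasible point `(x, X)` of `TH²(G)` with `t = 1ᵀx ≥ 1` rescales to `X / t ∈ CTH²(G)`: the
trace of `X` is `t`, and since `X ⪰ x xᵀ` the objective `⟨J, X⟩ / t` is at least `t² / t = t`.
Because `STAB²` is convex and contains `0`, shrinking by `1 / t ≤ 1` keeps every exact subgraph
constraint. Points with `t < 1` are dominated by `e₁ e₁ᵀ`, which is feasible with value `1`.
-/

open Matrix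

noncomputable section

/-- A stable set vector of a graph `G`: a 0/1 vector with `s i * s j = 0` on edges. -/
def IsStableVec {V : Type*} (G : SimpleGraph V) (s : V → ℝ) : Prop :=
  (∀ i, s i = 0 ∨ s i = 1) ∧ ∀ i j, G.Adj i j → s i * s j = 0

/-- The squared stable set polytope `STAB²(G) = conv{ s sᵀ : s ∈ S(G) }`. -/
def stab2 {V : Type*} (G : SimpleGraph V) : Set (Matrix V V ℝ) :=
  convexHull ℝ { M | ∃ s, IsStableVec G s ∧ M = Matrix.vecMulVec s s }

/-- The scaled squared stable set polytope
`SSTAB²(G) = conv({ (1/(sᵀs)) s sᵀ : s ∈ S(G), s ≠ 0 } ∪ {0})`. -/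
def sstab2 {V : Type*} [Fintype V] (G : SimpleGraph V) : Set (Matrix V V ℝ) :=
  convexHull ℝ
    ({ M | ∃ s, IsStableVec G s ∧ s ≠ 0 ∧
        M = (∑ k, s k * s k)⁻¹ • Matrix.vecMulVec s s } ∪ {(0 : Matrix V V ℝ)})

/-- The feasible region `TH²(G)` of the SDP (Tn+1): pairs `(x, X)` with `X` symmetric,
`diag X = x`, `X i j = 0` on edges and `X - x xᵀ` positive semidefinite. -/
def th2 {n : ℕ} (G : SimpleGraph (Fin n)) :
    Set ((Fin n → ℝ) × Matrix (Fin n) (Fin n) ℝ) :=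
  { p | p.2.IsSymm ∧ (∀ i, p.2 i i = p.1 i) ∧
      (∀ i j, G.Adj i j → p.2 i j = 0) ∧ (p.2 - Matrix.vecMulVec p.1 p.1).PosSemidef }

/-- The feasible region `CTH²(G)` of the SDP (Tn): symmetric PSD matrices with trace 1
vanishing on edges. -/
def cth2 {n : ℕ} (G : SimpleGraph (Fin n)) : Set (Matrix (Fin n) (Fin n) ℝ) :=
  { X | X.IsSymm ∧ X.trace = 1 ∧ (∀ i j, G.Adj i j → X i j = 0) ∧ X.PosSemidef }

/-- The principal submatrix `X_I` of `X` indexed by `I`. -/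
def subMat {n : ℕ} (X : Matrix (Fin n) (Fin n) ℝ) (I : Finset (Fin n)) :
    Matrix (I : Set (Fin n)) (I : Set (Fin n)) ℝ :=
  X.submatrix Subtype.val Subtype.val

/-- The exact subgraph constraint (ESC) for the subgraph of `G` induced by `I`. -/
def escFeas {n : ℕ} (G : SimpleGraph (Fin n)) (X : Matrix (Fin n) (Fin n) ℝ)
    (I : Finset (Fin n)) : Prop :=
  subMat X I ∈ stab2 (G.induce (I : Set (Fin n)))

/-- The scaled exact subgraph constraint (SESC) for the subgraph of `G` induced by `I`. -/
def sescFeas {n : ℕ} (G : SimpleGraph (Fin n)) (X : Matrix (Fin n) (Fin n) ℝ)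
    (I : Finset (Fin n)) : Prop :=
  subMat X I ∈ sstab2 (G.induce (I : Set (Fin n)))

/-- `z^E_J(G)`: optimal value of (Tn+1) with the ESCs for all `I ∈ J`. -/
def zE {n : ℕ} (G : SimpleGraph (Fin n)) (J : Set (Finset (Fin n))) : ℝ :=
  sSup { r | ∃ x X, (x, X) ∈ th2 G ∧ (∀ I ∈ J, escFeas G X I) ∧ r = ∑ i, x i }

/-- `z^C_J(G)`: optimal value of (Tn) with the ESCs for all `I ∈ J`. -/
def zC {n : ℕ} (G : SimpleGraph (Fin n)) (J : Set (Finset (Fin n))) : ℝ :=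
  sSup { r | ∃ X, X ∈ cth2 G ∧ (∀ I ∈ J, escFeas G X I) ∧ r = ∑ i, ∑ j, X i j }

/-- `z^S_J(G)`: optimal value of (Tn) with the SESCs for all `I ∈ J`. -/
def zS {n : ℕ} (G : SimpleGraph (Fin n)) (J : Set (Finset (Fin n))) : ℝ :=
  sSup { r | ∃ X, X ∈ cth2 G ∧ (∀ I ∈ J, sescFeas G X I) ∧ r = ∑ i, ∑ j, X i j }

/-- The collection `J_k` of all vertex subsets of cardinality `k`. -/
def Jk (n k : ℕ) : Set (Finset (Fin n)) := { I | I.card = k }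


section PosSemidef

variable {m : Type*} [Fintype m]

lemma Matrix.PosSemidef.apply_add_apply_le [DecidableEq m] {X : Matrix m m ℝ}
    (hX : X.PosSemidef) (i j : m) : X i j + X j i ≤ X i i + X j j := by
  have h := hX.dotProduct_mulVec_nonneg (Pi.single i 1 - Pi.single j 1)
  simp only [star_trivial, sub_dotProduct, dotProduct_sub, mulVec_sub, mulVec_single_one,
    single_one_dotProduct, col_apply] at h
  linarith

lemma Matrix.PosSemidef.sum_apply_le_card_mul_trace {X : Matrix m m ℝ} (hX : X.PosSemidef) :
    ∑ i, ∑ j, X i j ≤ Fintype.card m * X.trace := by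
  classical
  have h := Finset.sum_le_sum fun i (_ : i ∈ Finset.univ) =>
    Finset.sum_le_sum fun j (_ : j ∈ Finset.univ) => hX.apply_add_apply_le i j
  simp only [Finset.sum_add_distrib, Finset.sum_const, Finset.card_univ, nsmul_eq_mul] at h
  rw [Finset.sum_comm (f := fun i j => X j i), ← Finset.mul_sum] at h
  simp only [trace, diag]
  linarith

lemma sq_sum_le_sum_apply_of_posSemidef_sub_vecMulVec {X : Matrix m m ℝ} {x : m → ℝ}
    (h : (X - vecMulVec x x).PosSemidef) : (∑ i, x i) ^ 2 ≤ ∑ i, ∑ j, X i j := by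
  have h1 := h.dotProduct_mulVec_nonneg 1
  simp only [star_trivial, sub_mulVec, dotProduct_sub, sub_nonneg] at h1
  simpa [dotProduct, mulVec, vecMulVec_apply, sq, Finset.sum_mul_sum] using h1

end PosSemidef

section StableSets

variable {V W : Type*} {G : SimpleGraph V}

lemma IsStableVec.comp {H : SimpleGraph W} {s : V → ℝ} (hs : IsStableVec G s) (f : H →g G) :
    IsStableVec H (s ∘ f) :=
  ⟨fun w => hs.1 (f w), fun _ _ hab => hs.2 _ _ (f.map_adj hab)⟩

lemma isStableVec_zero : IsStableVec G 0 :=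
  ⟨fun _ => Or.inl rfl, fun _ _ _ => zero_mul 0⟩

lemma isStableVec_single [DecidableEq V] (v : V) : IsStableVec G (Pi.single v 1) := by
  refine ⟨fun i => ?_, fun a b hab => ?_⟩
  · rcases eq_or_ne i v with rfl | hi <;> simp [*]
  · rcases eq_or_ne a v with rfl | ha
    · simp [hab.ne.symm]
    · simp [ha]

lemma vecMulVec_mem_stab2 {s : V → ℝ} (hs : IsStableVec G s) : vecMulVec s s ∈ stab2 G :=
  subset_convexHull ℝ _ ⟨s, hs, rfl⟩

lemma zero_mem_stab2 : (0 : Matrix V V ℝ) ∈ stab2 G := by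
  simpa using vecMulVec_mem_stab2 (isStableVec_zero (G := G))

lemma smul_mem_stab2 {M : Matrix V V ℝ} (hM : M ∈ stab2 G) {c : ℝ} (hc : c ∈ Set.Icc 0 1) :
    c • M ∈ stab2 G :=
  (convex_convexHull ℝ _).smul_mem_of_zero_mem zero_mem_stab2 hM hc

end StableSets

section Feasibility

variable {n : ℕ} {G : SimpleGraph (Fin n)}

lemma IsStableVec.escFeas {s : Fin n → ℝ} (hs : IsStableVec G s) (I : Finset (Fin n)) :
    escFeas G (vecMulVec s s) I :=
  vecMulVec_mem_stab2 (hs.comp (SimpleGraph.Embedding.induce _).toHom)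

lemma escFeas.smul {X : Matrix (Fin n) (Fin n) ℝ} {I : Finset (Fin n)} (h : escFeas G X I)
    {c : ℝ} (hc : c ∈ Set.Icc 0 1) : escFeas G (c • X) I :=
  smul_mem_stab2 h hc

lemma IsStableVec.vecMulVec_mem_cth2 {s : Fin n → ℝ} (hs : IsStableVec G s) (h1 : s ⬝ᵥ s = 1) :
    vecMulVec s s ∈ cth2 G := by
  refine ⟨transpose_vecMulVec s s, by rw [trace_vecMulVec, h1], hs.2, ?_⟩
  simpa using posSemidef_vecMulVec_self_star s

lemma zC_set_bddAbove (J : Set (Finset (Fin n))) :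
    BddAbove { r | ∃ X, X ∈ cth2 G ∧ (∀ I ∈ J, escFeas G X I) ∧ r = ∑ i, ∑ j, X i j } := by
  refine ⟨n, ?_⟩
  rintro _ ⟨X, ⟨-, htr, -, hX⟩, -, rfl⟩
  simpa [htr] using hX.sum_apply_le_card_mul_trace

lemma one_le_zC (hn : 1 ≤ n) (G : SimpleGraph (Fin n)) (J : Set (Finset (Fin n))) :
    1 ≤ zC G J := by
  let e : Fin n → ℝ := Pi.single ⟨0, hn⟩ 1
  have he : IsStableVec G e := isStableVec_single _
  refine le_csSup (zC_set_bddAbove J)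
    ⟨vecMulVec e e, he.vecMulVec_mem_cth2 (by simp [e]), fun I _ => he.escFeas I, ?_⟩
  simp [e, vecMulVec_apply, ← Finset.sum_mul_sum]

lemma posSemidef_of_mem_th2 {x : Fin n → ℝ} {X : Matrix (Fin n) (Fin n) ℝ}
    (h : (x, X) ∈ th2 G) : X.PosSemidef := by
  simpa using h.2.2.2.add (posSemidef_vecMulVec_self_star x)

lemma trace_eq_sum_of_mem_th2 {x : Fin n → ℝ} {X : Matrix (Fin n) (Fin n) ℝ}
    (h : (x, X) ∈ th2 G) : X.trace = ∑ i, x i :=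
  Finset.sum_congr rfl fun i _ => h.2.1 i

lemma inv_smul_mem_cth2_of_mem_th2 {x : Fin n → ℝ} {X : Matrix (Fin n) (Fin n) ℝ}
    (h : (x, X) ∈ th2 G) (hx : 0 < ∑ i, x i) : (∑ i, x i)⁻¹ • X ∈ cth2 G := by
  refine ⟨?_, ?_, fun i j hij => ?_, (posSemidef_of_mem_th2 h).smul (inv_nonneg.2 hx.le)⟩
  · rw [IsSymm, transpose_smul, h.1]
  · rw [trace_smul, trace_eq_sum_of_mem_th2 h, smul_eq_mul, inv_mul_cancel₀ hx.ne']
  · simp [show X i j = 0 from h.2.2.1 i j hij]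

lemma sum_le_zC_of_mem_th2 {x : Fin n → ℝ} {X : Matrix (Fin n) (Fin n) ℝ}
    {J : Set (Finset (Fin n))} (h : (x, X) ∈ th2 G) (hJ : ∀ I ∈ J, escFeas G X I)
    (hx : 1 ≤ ∑ i, x i) : ∑ i, x i ≤ zC G J := by
  set t := ∑ i, x i
  have ht : 0 < t := one_pos.trans_le hx
  refine le_csSup_of_le (zC_set_bddAbove J) ⟨t⁻¹ • X, inv_smul_mem_cth2_of_mem_th2 h ht,
    fun I hI => (hJ I hI).smul ⟨inv_nonneg.2 ht.le, inv_le_one_of_one_le₀ hx⟩, rfl⟩ ?_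
  calc t = t⁻¹ * t ^ 2 := by field_simp
    _ ≤ t⁻¹ * ∑ i, ∑ j, X i j :=
      mul_le_mul_of_nonneg_left (sq_sum_le_sum_apply_of_posSemidef_sub_vecMulVec h.2.2.2)
        (inv_nonneg.2 ht.le)
    _ = ∑ i, ∑ j, (t⁻¹ • X) i j := by simp [Finset.mul_sum]

end Feasibility

/-- for any collection `J` of vertex subsets, `z^E_J(G) ≤ z^C_J(G)`. -/
theorem stmt7 {n : ℕ} (hn : 1 ≤ n) (G : SimpleGraph (Fin n))
    (J : Set (Finset (Fin n))) :
    zE G J ≤ zC G J := by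
  have h1 := one_le_zC hn G J
  refine Real.sSup_le ?_ (zero_le_one.trans h1)
  rintro _ ⟨x, X, hX, hJ, rfl⟩
  rcases le_total (∑ i, x i) 1 with hx | hx
  · exact hx.trans h1
  · exact sum_le_zC_of_mem_th2 hX hJ hx
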